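/- arXiv:1301.1819 — 2 statements merged into one kernel-verified Lean document; each statement's English description precedes it below -/
import Mathlib

section
/- Consider the IFS on ℝ given by φ₁(x) = x/2, φ₂(x) = x/4 + 1/4, φ₃(x) = x/4 + 3/4. Its attractor A is not a finite union of closed intervals; in fact A is the closure of a countable union of disjoint nondegenerate closed intervals accumulating at the point 1. -/
/-!
The Hutchinson operator `A ↦ φ₁ A ∪ φ₂ A ∪ φ₃ A` contracts the Hausdorff distance by `1/2`,
so it has at most one nonempty compact fixed point. With `a n = 1 - 4⁻ⁿ` and
`b n = 1 - 4⁻ⁿ / 2`, the set `K = [0, 1] \ ⋃ₙ (b n, a (n + 1))` is one: `φ₃` maps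
`[a n, b n]` onto `[a (n + 1), b (n + 1)]`, while `φ₁ K ∪ φ₂ K = [0, 1/2] = [a 0, b 0]` because
`φ₂ K` covers the gaps of `φ₁ K`. Every point of `K` below `1` lies in some `[a n, b n]`,
so `K` is the closure of these intervals. A finite union of intervals containing all `a n`
would contain two of them in one interval, hence a gap between them.
-/

open Set Filter Metric Topology
open scoped NNReal ENNReal

theorem LipschitzWith.infEDist_image_le {X Y : Type*} [PseudoEMetricSpace X] [PseudoEMetricSpace Y]
    {K : ℝ≥0} {f : X → Y} (hf : LipschitzWith K f) (hK : K ≠ 0) (x : X) (t : Set X) :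
    infEDist (f x) (f '' t) ≤ K * infEDist x t := by
  simp_rw [infEDist, ENNReal.mul_iInf_of_ne (ENNReal.coe_ne_zero.2 hK) ENNReal.coe_ne_top]
  exact le_iInf₂ fun y hy => (iInf₂_le (f y) (mem_image_of_mem f hy)).trans (hf x y)

theorem LipschitzWith.hausdorffEDist_image_le {X Y : Type*} [PseudoEMetricSpace X]
    [PseudoEMetricSpace Y] {K : ℝ≥0} {f : X → Y} (hf : LipschitzWith K f) (hK : K ≠ 0)
    (s t : Set X) : hausdorffEDist (f '' s) (f '' t) ≤ K * hausdorffEDist s t := by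
  refine hausdorffEDist_le_of_infEDist ?_ ?_ <;> rintro _ ⟨x, hx, rfl⟩
  · exact (hf.infEDist_image_le hK x t).trans
      (by gcongr; exact infEDist_le_hausdorffEDist_of_mem hx)
  · rw [hausdorffEDist_comm]
    exact (hf.infEDist_image_le hK x s).trans
      (by gcongr; exact infEDist_le_hausdorffEDist_of_mem hx)

theorem eq_of_isFixedPt_of_hausdorffEDist_le {X : Type*} [EMetricSpace X] {T : Set X → Set X}
    {K : ℝ≥0∞} (hK : K < 1) (hT : ∀ s t, hausdorffEDist (T s) (T t) ≤ K * hausdorffEDist s t)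
    {s t : Set X} (hs : IsClosed s) (ht : IsClosed t) (hst : hausdorffEDist s t ≠ ⊤)
    (hTs : Function.IsFixedPt T s) (hTt : Function.IsFixedPt T t) : s = t := by
  refine (hs.hausdorffEDist_zero_iff ht).1 (by_contra fun h₀ => ?_)
  have hle := hT s t
  rw [hTs.eq, hTt.eq] at hle
  have hlt := ENNReal.mul_lt_mul_right h₀ hst hK
  rw [mul_one, mul_comm] at hlt
  exact hlt.not_ge hle

theorem lipschitzWith_div_add (c : ℝ≥0) (d : ℝ) : LipschitzWith c⁻¹ fun x : ℝ => x / c + d := by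
  refine LipschitzWith.of_dist_le_mul fun x y => ?_
  rw [Real.dist_eq, Real.dist_eq, add_sub_add_right_eq_sub, ← sub_div, abs_div, NNReal.abs_eq,
    div_eq_inv_mul, NNReal.coe_inv]

theorem ne_iUnion_of_ordConnected {α ι : Type*} [LinearOrder α] [Finite ι] {C : ι → Set α}
    (hC : ∀ i, (C i).OrdConnected) {S : Set α} {x g : ℕ → α} (hx : ∀ n, x n ∈ S)
    (hg : ∀ n, g n ∉ S) (hxg : ∀ ⦃n m⦄, n < m → g n ∈ Icc (x n) (x m)) : S ≠ ⋃ i, C i := by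
  rintro rfl
  choose i hi using fun n => mem_iUnion.1 (hx n)
  obtain ⟨n, m, hnm, heq⟩ := Finite.exists_ne_map_eq_of_infinite i
  wlog h : n < m generalizing n m
  · exact this m n hnm.symm heq.symm (hnm.lt_or_gt.resolve_left h)
  exact hg n (mem_iUnion_of_mem (i n) ((hC (i n)).out (hi n) (heq ▸ hi m) (hxg h)))

namespace Mendivil

noncomputable def a (n : ℕ) : ℝ := 1 - 4⁻¹ ^ n
noncomputable def b (n : ℕ) : ℝ := 1 - 4⁻¹ ^ n / 2

def gap (n : ℕ) : Set ℝ := Ioo (b n) (a (n + 1))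

def attractor : Set ℝ := Icc 0 1 \ ⋃ n, gap n

lemma a_zero : a 0 = 0 := by simp [a]
lemma b_zero : b 0 = 1 / 2 := by norm_num [b]
lemma a_succ (n : ℕ) : a (n + 1) = a n / 4 + 3 / 4 := by rw [a, a, pow_succ]; ring
lemma b_succ (n : ℕ) : b (n + 1) = b n / 4 + 3 / 4 := by rw [b, b, pow_succ]; ring

lemma a_lt_b (n : ℕ) : a n < b n := by
  have := pow_pos (by norm_num : (0 : ℝ) < 4⁻¹) n; rw [a, b]; linarith

lemma b_lt_a_succ (n : ℕ) : b n < a (n + 1) := by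
  have := pow_pos (by norm_num : (0 : ℝ) < 4⁻¹) n; rw [a, b, pow_succ]; linarith

lemma b_lt_one (n : ℕ) : b n < 1 := by
  have := pow_pos (by norm_num : (0 : ℝ) < 4⁻¹) n; rw [b]; linarith

lemma strictMono_a : StrictMono a :=
  strictMono_nat_of_lt_succ fun n => (a_lt_b n).trans (b_lt_a_succ n)

lemma strictMono_b : StrictMono b :=
  strictMono_nat_of_lt_succ fun n => (b_lt_a_succ n).trans (a_lt_b (n + 1))

lemma b_lt_a {n m : ℕ} (h : n < m) : b n < a m :=
  (b_lt_a_succ n).trans_le (strictMono_a.monotone h)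

lemma tendsto_a : Tendsto a atTop (𝓝 1) := by
  have := (tendsto_pow_atTop_nhds_zero_of_lt_one (by norm_num : (0 : ℝ) ≤ 4⁻¹)
    (by norm_num)).const_sub 1
  rwa [sub_zero] at this

lemma pairwise_disjoint_Icc : Pairwise (Function.onFun Disjoint fun n => Icc (a n) (b n)) :=
  (pairwise_disjoint_on _).2 fun _ _ h =>
    disjoint_left.2 fun _ hn hm => (hn.2.trans_lt (b_lt_a h)).not_ge hm.1

lemma isClosed_attractor : IsClosed attractor :=
  isClosed_Icc.sdiff (isOpen_iUnion fun _ => isOpen_Ioo)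

lemma attractor_subset_Icc : attractor ⊆ Icc 0 1 := sdiff_subset

lemma isCompact_attractor : IsCompact attractor :=
  isCompact_Icc.of_isClosed_subset isClosed_attractor attractor_subset_Icc

lemma notMem_attractor_of_mem_gap {x : ℝ} {n : ℕ} (hx : x ∈ gap n) : x ∉ attractor :=
  fun h => h.2 (mem_iUnion_of_mem n hx)

lemma Icc_subset_attractor (n : ℕ) : Icc (a n) (b n) ⊆ attractor := by
  refine fun x hx => ⟨⟨?_, hx.2.trans (b_lt_one n).le⟩, ?_⟩
  · exact a_zero ▸ (strictMono_a.monotone n.zero_le).trans hx.1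
  simp only [mem_iUnion, gap, mem_Ioo, not_exists, not_and, not_lt]
  intro m hm
  rcases lt_or_ge m n with h | h
  · exact (strictMono_a.monotone h).trans hx.1
  · exact absurd (hx.2.trans (strictMono_b.monotone h)) hm.not_ge

lemma one_mem_attractor : (1 : ℝ) ∈ attractor := by
  refine ⟨⟨zero_le_one, le_rfl⟩, ?_⟩
  simp only [mem_iUnion, gap, mem_Ioo, not_exists, not_and, not_lt]
  exact fun m _ => ((a_lt_b _).trans (b_lt_one _)).le

lemma exists_mem_Icc_of_mem_attractor {x : ℝ} (hx : x ∈ attractor) (hx1 : x < 1) :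
    ∃ n, x ∈ Icc (a n) (b n) := by
  obtain ⟨n, hn, hn'⟩ := exists_nat_pow_near_of_lt_one (sub_pos.2 hx1) (by linarith [hx.1.1])
    (by norm_num : (0 : ℝ) < 4⁻¹) (by norm_num)
  refine ⟨n, by rw [a]; linarith, not_lt.1 fun h => notMem_attractor_of_mem_gap ⟨h, ?_⟩ hx⟩
  rw [a]; linarith

lemma attractor_eq_closure : attractor = closure (⋃ n, Icc (a n) (b n)) := by
  refine Subset.antisymm (fun x hx => ?_)
    (closure_minimal (iUnion_subset Icc_subset_attractor) isClosed_attractor)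
  rcases (attractor_subset_Icc hx).2.lt_or_eq with hx1 | rfl
  · obtain ⟨n, hn⟩ := exists_mem_Icc_of_mem_attractor hx hx1
    exact subset_closure (mem_iUnion_of_mem n hn)
  · exact mem_closure_of_tendsto tendsto_a (Eventually.of_forall fun n =>
      mem_iUnion_of_mem n (left_mem_Icc.2 (a_lt_b n).le))

lemma attractor_ne_iUnion_Icc {ι : Type*} [Finite ι] (α β : ι → ℝ) :
    attractor ≠ ⋃ i, Icc (α i) (β i) := by
  refine ne_iUnion_of_ordConnected (fun _ => ordConnected_Icc) (x := a)
    (g := fun n => (b n + a (n + 1)) / 2)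
    (fun n => Icc_subset_attractor n (left_mem_Icc.2 (a_lt_b n).le))
    (fun n => notMem_attractor_of_mem_gap (n := n) ?_) fun n m h => ?_
  · constructor <;> linarith [b_lt_a_succ n]
  · have := strictMono_a.monotone (Nat.succ_le_of_lt h)
    constructor <;> linarith [a_lt_b n, b_lt_a_succ n]

lemma mem_gap_succ_iff {y : ℝ} {n : ℕ} : y / 4 + 3 / 4 ∈ gap (n + 1) ↔ y ∈ gap n := by
  simp only [gap, mem_Ioo, a_succ, b_succ]
  constructor <;> rintro ⟨h₁, h₂⟩ <;> constructor <;> linarith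

lemma div_four_add_mem_attractor_iff {y : ℝ} (hy : 0 ≤ y) :
    y / 4 + 3 / 4 ∈ attractor ↔ y ∈ attractor := by
  have hgap : (∃ n, y / 4 + 3 / 4 ∈ gap n) ↔ ∃ n, y ∈ gap n := by
    refine ⟨?_, fun ⟨n, hn⟩ => ⟨n + 1, mem_gap_succ_iff.2 hn⟩⟩
    rintro ⟨_ | n, hn⟩
    · rw [gap, a_succ, a_zero, b_zero] at hn
      linarith [hn.2]
    · exact ⟨n, mem_gap_succ_iff.1 hn⟩
  simp only [attractor, Set.mem_sdiff, mem_Icc, mem_iUnion, hgap]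
  constructor <;> rintro ⟨⟨h₀, h₁⟩, h⟩ <;> exact ⟨⟨by linarith, by linarith⟩, h⟩

lemma image_half_union_image_quarter :
    (fun x => x / 2) '' attractor ∪ (fun x => x / 4 + 1 / 4) '' attractor = Icc 0 (1 / 2) := by
  refine Subset.antisymm ?_ fun x hx => ?_
  · rintro _ (⟨y, hy, rfl⟩ | ⟨y, hy, rfl⟩) <;> obtain ⟨h₀, h₁⟩ := attractor_subset_Icc hy <;>
      constructor <;> linarith
  by_cases h : ∃ n, 2 * x ∈ gap n
  -- `y ↦ 2 * y - 1` maps `gap n` into `Icc (a n) (b n)`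
  · obtain ⟨n, hn₁, hn₂⟩ := h
    refine Or.inr ⟨4 * x - 1, Icc_subset_attractor n ⟨?_, ?_⟩, by ring⟩
    · rw [b] at hn₁; rw [a]; linarith
    · rw [a, pow_succ] at hn₂; rw [b]; linarith
  · refine Or.inl ⟨2 * x, ⟨⟨by linarith [hx.1], by linarith [hx.2]⟩, ?_⟩, by ring⟩
    simpa only [mem_iUnion] using h

def hutchinson (s : Set ℝ) : Set ℝ :=
  (fun x => x / 2) '' s ∪ (fun x => x / 4 + 1 / 4) '' s ∪ (fun x => x / 4 + 3 / 4) '' s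

lemma hausdorffEDist_hutchinson_le (s t : Set ℝ) :
    hausdorffEDist (hutchinson s) (hutchinson t) ≤ 2⁻¹ * hausdorffEDist s t := by
  have image_le (f : ℝ → ℝ) (hf : LipschitzWith 2⁻¹ f) :
      hausdorffEDist (f '' s) (f '' t) ≤ 2⁻¹ * hausdorffEDist s t := by
    simpa using hf.hausdorffEDist_image_le (by norm_num) s t
  have lip_half : LipschitzWith 2⁻¹ fun x : ℝ => x / 2 := by
    simpa using lipschitzWith_div_add 2 0
  have lip_quarter (d : ℝ) : LipschitzWith 2⁻¹ fun x : ℝ => x / 4 + d := by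
    have : LipschitzWith 4⁻¹ fun x : ℝ => x / 4 + d := by simpa using lipschitzWith_div_add 4 d
    exact this.weaken (inv_anti₀ two_pos (by norm_num))
  exact hausdorffEDist_union_le.trans <| max_le (hausdorffEDist_union_le.trans <|
    max_le (image_le _ lip_half) (image_le _ (lip_quarter _))) (image_le _ (lip_quarter _))

lemma hutchinson_attractor : hutchinson attractor = attractor := by
  rw [hutchinson, image_half_union_image_quarter]
  refine Subset.antisymm (union_subset ?_ ?_) fun x hx => ?_
  · simpa only [a_zero, b_zero] using Icc_subset_attractor 0
  · rintro _ ⟨y, hy, rfl⟩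
    exact (div_four_add_mem_attractor_iff (attractor_subset_Icc hy).1).2 hy
  rcases le_or_gt x (1 / 2) with hx₂ | hx₂
  · exact Or.inl ⟨(attractor_subset_Icc hx).1, hx₂⟩
  have hx₃ : 3 / 4 ≤ x := by
    by_contra h
    exact notMem_attractor_of_mem_gap (n := 0)
      ⟨by rwa [b_zero], by rw [a_succ, a_zero]; linarith⟩ hx
  refine Or.inr ⟨4 * x - 3, (div_four_add_mem_attractor_iff (by linarith)).1 ?_, by ring⟩
  convert hx using 1; ring

end Mendivil

theorem mendivil_attractor (A : Set ℝ) (hne : A.Nonempty) (hc : IsCompact A)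
    (hA : A = (fun x => x / 2) '' A ∪ (fun x => x / 4 + 1 / 4) '' A ∪
        (fun x => x / 4 + 3 / 4) '' A) :
    (¬ ∃ (n : ℕ) (a b : Fin n → ℝ), (∀ i, a i ≤ b i) ∧
        A = ⋃ i, Set.Icc (a i) (b i)) ∧
    ∃ a b : ℕ → ℝ, (∀ n, a n < b n) ∧
        (Pairwise (Function.onFun Disjoint fun n => Set.Icc (a n) (b n))) ∧
        A = closure (⋃ n, Set.Icc (a n) (b n)) ∧
        Filter.Tendsto a Filter.atTop (nhds 1) := by
  obtain rfl : A = Mendivil.attractor :=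
    eq_of_isFixedPt_of_hausdorffEDist_le (by norm_num) Mendivil.hausdorffEDist_hutchinson_le
      hc.isClosed Mendivil.isClosed_attractor
      (hausdorffEDist_ne_top_of_nonempty_of_bounded hne ⟨1, Mendivil.one_mem_attractor⟩
        hc.isBounded Mendivil.isCompact_attractor.isBounded)
      hA.symm Mendivil.hutchinson_attractor
  exact ⟨fun ⟨_, α, β, _, h⟩ => Mendivil.attractor_ne_iUnion_Icc α β h, Mendivil.a, Mendivil.b,
    Mendivil.a_lt_b, Mendivil.pairwise_disjoint_Icc, Mendivil.attractor_eq_closure,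
    Mendivil.tendsto_a⟩
end

section
/- Let σ and μ be Borel probability measures on ℝ with support of σ contained in [-1,1], let 0 < δ < 1, δ̄ = 1 - δ, and suppose μ satisfies ∫ f dμ = ∫∫ f(δs + δ̄β) dμ(s) dσ(β) for all bounded continuous f. Then supp(σ) ⊆ supp(μ). -/
/-!
Testing the invariance identity against a bump function shows that the support of `μ` is mapped
into itself by `s ↦ δ s + (1 - δ) β` for every `β` in the support of `σ`. That map is the
homothety of ratio `δ < 1` centred at `β`, so its iterates drive any point of the (nonempty,
closed) support of `μ` to `β`, which therefore lies in the support of `μ`.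
-/

open MeasureTheory Metric Set

/-- The topological support of a Borel measure on ℝ: points all of whose
neighborhoods have positive measure. -/
def msupport (ν : MeasureTheory.Measure ℝ) : Set ℝ :=
  {x | ∀ ε > 0, 0 < ν (Metric.ball x ε)}

open Filter Topology BoundedContinuousFunction

lemma msupport_eq_support (ν : Measure ℝ) : msupport ν = ν.support :=
  Set.ext fun _ => nhds_basis_ball.mem_measureSupport.symm

lemma integral_pos_of_mem_support {X : Type*} [TopologicalSpace X] [MeasurableSpace X]
    [OpensMeasurableSpace X] {ν : Measure X} {g : X → ℝ} (hg : Continuous g) (hg0 : 0 ≤ g)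
    (hgi : Integrable g ν) {x : X} (hx : x ∈ ν.support) (hgx : 0 < g x) :
    0 < ∫ y, g y ∂ν := by
  rw [integral_pos_iff_support_of_nonneg hg0 hgi]
  exact (Measure.mem_support_iff_forall x).1 hx _ (hg.isOpen_support.mem_nhds hgx.ne')

lemma BoundedContinuousFunction.continuous_integral_comp {X Y Z : Type*} [TopologicalSpace X]
    [FirstCountableTopology X] [TopologicalSpace Y] [TopologicalSpace.PseudoMetrizableSpace Y] [MeasurableSpace Y]
    [OpensMeasurableSpace Y] [TopologicalSpace Z] (μ : Measure Y) [IsFiniteMeasure μ]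
    (f : Z →ᵇ ℝ) {φ : X → Y → Z} (hφ : Continuous (Function.uncurry φ)) :
    Continuous fun x => ∫ y, f (φ x y) ∂μ :=
  continuous_of_dominated (bound := fun _ => ‖f‖)
    (fun x => (f.continuous.comp (hφ.comp (Continuous.prodMk_right x))).aestronglyMeasurable)
    (fun _ => ae_of_all _ fun _ => f.norm_coe_le_norm _) (integrable_const _)
    (ae_of_all _ fun y => f.continuous.comp (hφ.comp (Continuous.prodMk_left y)))

lemma exists_nonneg_pos_support_subset_ball {X : Type*} [PseudoMetricSpace X] (y : X) {ε : ℝ}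
    (hε : 0 < ε) : ∃ f : X →ᵇ ℝ, 0 ≤ ⇑f ∧ 0 < f y ∧ Function.support f ⊆ ball y ε := by
  refine ⟨ofNormedAddCommGroup (fun z => max 0 (ε - dist z y)) (by fun_prop) ε fun z => ?_,
    fun z => le_max_left _ _, by simpa using hε, fun z hz => ?_⟩
  · rw [Real.norm_eq_abs, abs_of_nonneg (le_max_left _ _)]
    exact max_le hε.le (by linarith [dist_nonneg (x := z) (y := y)])
  · by_contra hzy
    exact hz (max_eq_left (by simpa [mem_ball] using hzy))

lemma IsClosed.center_mem_of_mapsTo_homothety {𝕜 E : Type*} [NormedField 𝕜]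
    [NormedAddCommGroup E] [NormedSpace 𝕜 E] {S : Set E} (hS : IsClosed S) {x c : E}
    (hx : x ∈ S) {r : 𝕜} (hr : ‖r‖ < 1) (hmaps : MapsTo (AffineMap.homothety c r) S S) :
    c ∈ S := by
  have hiter : ∀ n : ℕ, (AffineMap.homothety c r)^[n] x = AffineMap.homothety c (r ^ n) x := by
    intro n
    induction n with
    | zero => simp
    | succ n ih =>
      rw [Function.iterate_succ_apply', ih, pow_succ', AffineMap.homothety_mul_apply]
  have hlim : Tendsto (fun n : ℕ => AffineMap.homothety c (r ^ n) x) atTop (𝓝 c) := by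
    have hcont : Continuous fun t : 𝕜 => AffineMap.homothety c t x := by
      simp only [AffineMap.homothety_apply]; fun_prop
    simpa [Function.comp_def] using
      (hcont.tendsto 0).comp (tendsto_pow_atTop_nhds_zero_of_norm_lt_one hr)
  exact hS.mem_of_tendsto hlim (Eventually.of_forall fun n => hiter n ▸ hmaps.iterate n hx)

lemma affine_mem_support_of_integral_eq {σ μ : Measure ℝ} [IsFiniteMeasure σ]
    [IsFiniteMeasure μ] {δ : ℝ}
    (hinv : ∀ f : ℝ →ᵇ ℝ, ∫ x, f x ∂μ = ∫ β, ∫ s, f (δ * s + (1 - δ) * β) ∂μ ∂σ)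
    {x β : ℝ} (hx : x ∈ μ.support) (hβ : β ∈ σ.support) :
    δ * x + (1 - δ) * β ∈ μ.support := by
  rw [nhds_basis_ball.mem_measureSupport]
  intro ε hε
  obtain ⟨f, hf0, hfy, hfsupp⟩ := exists_nonneg_pos_support_subset_ball (δ * x + (1 - δ) * β) hε
  have hF : Continuous fun b => ∫ s, f (δ * s + (1 - δ) * b) ∂μ :=
    f.continuous_integral_comp μ (φ := fun b s => δ * s + (1 - δ) * b) (by fun_prop)
  have hFint : Integrable (fun b => ∫ s, f (δ * s + (1 - δ) * b) ∂μ) σ :=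
    .of_bound hF.aestronglyMeasurable (‖f‖ * μ.real univ) (ae_of_all _ fun _ =>
      norm_integral_le_of_norm_le_const (ae_of_all _ fun _ => f.norm_coe_le_norm _))
  have hinner : 0 < ∫ s, f (δ * s + (1 - δ) * β) ∂μ :=
    integral_pos_of_mem_support (by fun_prop) (fun s => hf0 (δ * s + (1 - δ) * β))
      ((f.compContinuous ⟨fun s => δ * s + (1 - δ) * β, by fun_prop⟩).integrable μ) hx hfy
  have houter : 0 < ∫ b, ∫ s, f (δ * s + (1 - δ) * b) ∂μ ∂σ :=
    integral_pos_of_mem_support hF (fun b => integral_nonneg fun s => hf0 (δ * s + (1 - δ) * b)) hFint hβ hinner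
  rw [← hinv, integral_pos_iff_support_of_nonneg hf0 (f.integrable μ)] at houter
  exact houter.trans_le (measure_mono hfsupp)

theorem supp_sigma_subset_supp_mu_general (σ μ : Measure ℝ)
    [IsProbabilityMeasure σ] [IsProbabilityMeasure μ]
    (δ : ℝ) (hδ0 : 0 < δ) (hδ1 : δ < 1)
    (hinv : ∀ f : BoundedContinuousFunction ℝ ℝ,
      ∫ x, f x ∂μ = ∫ β, ∫ s, f (δ * s + (1 - δ) * β) ∂μ ∂σ) :
    msupport σ ⊆ msupport μ := by
  intro β hβ
  rw [msupport_eq_support] at hβ ⊢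
  obtain ⟨x, hx⟩ := Measure.nonempty_support (IsProbabilityMeasure.ne_zero μ)
  refine Measure.isClosed_support.center_mem_of_mapsTo_homothety hx (r := δ)
    (by rwa [Real.norm_of_nonneg hδ0.le]) fun y hy => ?_
  convert affine_mem_support_of_integral_eq hinv hy hβ using 1
  rw [AffineMap.homothety_apply, vsub_eq_sub, vadd_eq_add, smul_eq_mul]
  ring

theorem supp_sigma_subset_supp_mu (σ μ : Measure ℝ)
    [IsProbabilityMeasure σ] [IsProbabilityMeasure μ]
    (δ : ℝ) (hδ0 : 0 < δ) (hδ1 : δ < 1)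
    (hσ : msupport σ ⊆ Set.Icc (-1 : ℝ) 1)
    (hinv : ∀ f : BoundedContinuousFunction ℝ ℝ,
      ∫ x, f x ∂μ = ∫ β, ∫ s, f (δ * s + (1 - δ) * β) ∂μ ∂σ) :
    msupport σ ⊆ msupport μ :=
  supp_sigma_subset_supp_mu_general σ μ δ hδ0 hδ1 hinv
end
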